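/- With Euclidean costs, if E_C(S, D) = 0 for the paper's demanders D (the four bilinear-weight demanders representing the dot annotation (x_dot, y_dot)), then the barycenter of the supplier distribution S equals (x_dot, y_dot). -/
import Mathlib

theorem emd_zero_implies_barycenter_eq_dot
    (N : ℕ) (u : Fin N → EuclideanSpace ℝ (Fin 2)) (S : Fin N → ℝ)
    (hS0 : ∀ n, 0 ≤ S n) (hS1 : ∑ n, S n = 1)
    (g x₁ y₁ xdot ydot : ℝ) (hg : 0 < g)
    (hx : x₁ ≤ xdot ∧ xdot ≤ x₁ + g) (hy : y₁ ≤ ydot ∧ ydot ≤ y₁ + g)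
    (v : Fin 4 → EuclideanSpace ℝ (Fin 2))
    (hv : v = fun m => (WithLp.equiv 2 (Fin 2 → ℝ)).symm
      (![![x₁, y₁], ![x₁ + g, y₁], ![x₁, y₁ + g], ![x₁ + g, y₁ + g]] m))
    (d : Fin 4 → ℝ)
    (hd : ∀ m, d m = (g - |xdot - v m 0|) * (g - |ydot - v m 1|) / g ^ 2)
    (hE : sInf {c | ∃ p : Fin N → Fin 4 → ℝ,
        ((∀ n m, 0 ≤ p n m) ∧ (∀ n, ∑ m, p n m = S n) ∧ (∀ m, ∑ n, p n m = d m)) ∧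
        c = ∑ n, ∑ m, ‖u n - v m‖ * p n m} = 0) :
    (∑ n, S n • u n) = (WithLp.equiv 2 (Fin 2 → ℝ)).symm ![xdot, ydot] := by
  obtain ⟨hx1, hx2⟩ := hx
  obtain ⟨hy1, hy2⟩ := hy
  have hg' : g ≠ 0 := ne_of_gt hg
  have ha0 : 0 ≤ xdot - x₁ := sub_nonneg.2 hx1
  have ha1 : xdot - x₁ ≤ g := by linarith
  have hb0 : 0 ≤ ydot - y₁ := sub_nonneg.2 hy1
  have hb1 : ydot - y₁ ≤ g := by linarith
  have hv00 : v 0 0 = x₁ := by rw [hv]; rfl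
  have hv01 : v 0 1 = y₁ := by rw [hv]; rfl
  have hv10 : v 1 0 = x₁ + g := by rw [hv]; rfl
  have hv11 : v 1 1 = y₁ := by rw [hv]; rfl
  have hv20 : v 2 0 = x₁ := by rw [hv]; rfl
  have hv21 : v 2 1 = y₁ + g := by rw [hv]; rfl
  have hv30 : v 3 0 = x₁ + g := by rw [hv]; rfl
  have hv31 : v 3 1 = y₁ + g := by rw [hv]; rfl
  have habsx0 : |xdot - x₁| = xdot - x₁ := abs_of_nonneg ha0
  have habsx1 : |xdot - (x₁ + g)| = x₁ + g - xdot := by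
    rw [abs_of_nonpos (by linarith)]; ring
  have habsy0 : |ydot - y₁| = ydot - y₁ := abs_of_nonneg hb0
  have habsy1 : |ydot - (y₁ + g)| = y₁ + g - ydot := by
    rw [abs_of_nonpos (by linarith)]; ring
  have hd0 : d 0 = (g - (xdot - x₁)) * (g - (ydot - y₁)) / g ^ 2 := by
    rw [hd 0, hv00, hv01, habsx0, habsy0]
  have hd1 : d 1 = (xdot - x₁) * (g - (ydot - y₁)) / g ^ 2 := by
    rw [hd 1, hv10, hv11, habsx1, habsy0]; ring
  have hd2 : d 2 = (g - (xdot - x₁)) * (ydot - y₁) / g ^ 2 := by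
    rw [hd 2, hv20, hv21, habsx0, habsy1]; ring
  have hd3 : d 3 = (xdot - x₁) * (ydot - y₁) / g ^ 2 := by
    rw [hd 3, hv30, hv31, habsx1, habsy1]; ring
  have hdnn : ∀ m, 0 ≤ d m := by
    intro m
    fin_cases m
    · show 0 ≤ d 0; rw [hd0]
      exact div_nonneg (mul_nonneg (by linarith) (by linarith)) (by positivity)
    · show 0 ≤ d 1; rw [hd1]
      exact div_nonneg (mul_nonneg (by linarith) (by linarith)) (by positivity)
    · show 0 ≤ d 2; rw [hd2]
      exact div_nonneg (mul_nonneg (by linarith) (by linarith)) (by positivity)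
    · show 0 ≤ d 3; rw [hd3]
      exact div_nonneg (mul_nonneg (by linarith) (by linarith)) (by positivity)
  have hdsum : ∑ m, d m = 1 := by
    rw [Fin.sum_univ_four, hd0, hd1, hd2, hd3]
    field_simp
    ring
  set dot : EuclideanSpace ℝ (Fin 2) := (WithLp.equiv 2 (Fin 2 → ℝ)).symm ![xdot, ydot] with hdot
  have hde : ∑ m, d m • v m = dot := by
    ext i
    fin_cases i
    · show ∑ m, (d m • v m) 0 = dot 0
      simp only [Finset.sum_apply, PiLp.smul_apply, smul_eq_mul]
      rw [Fin.sum_univ_four, hd0, hd1, hd2, hd3, hv00, hv10, hv20, hv30]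
      show _ = xdot
      field_simp
      ring
    · show ∑ m, (d m • v m) 1 = dot 1
      simp only [Finset.sum_apply, PiLp.smul_apply, smul_eq_mul]
      rw [Fin.sum_univ_four, hd0, hd1, hd2, hd3, hv01, hv11, hv21, hv31]
      show _ = ydot
      field_simp
      ring
  set E := {c | ∃ p : Fin N → Fin 4 → ℝ,
        ((∀ n m, 0 ≤ p n m) ∧ (∀ n, ∑ m, p n m = S n) ∧ (∀ m, ∑ n, p n m = d m)) ∧
        c = ∑ n, ∑ m, ‖u n - v m‖ * p n m} with hEdef
  have hne : E.Nonempty := by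
    refine ⟨∑ n, ∑ m, ‖u n - v m‖ * (S n * d m), fun n m => S n * d m, ⟨?_, ?_, ?_⟩, rfl⟩
    · exact fun n m => mul_nonneg (hS0 n) (hdnn m)
    · intro n; rw [← Finset.mul_sum, hdsum, mul_one]
    · intro m; rw [← Finset.sum_mul, hS1, one_mul]
  have hlb : ∀ c ∈ E, ‖(∑ n, S n • u n) - dot‖ ≤ c := by
    rintro c ⟨p, ⟨hp0, hpS, hpd⟩, rfl⟩
    have h1 : (∑ n, S n • u n) - dot = ∑ n, ∑ m, p n m • (u n - v m) := by
      have : ∑ n, ∑ m, p n m • (u n - v m)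
          = (∑ n, ∑ m, p n m • u n) - ∑ n, ∑ m, p n m • v m := by
        simp [smul_sub, Finset.sum_sub_distrib]
      rw [this, ← hde]
      congr 1
      · refine Finset.sum_congr rfl fun n _ => ?_
        rw [← Finset.sum_smul, hpS n]
      · rw [Finset.sum_comm]
        refine Finset.sum_congr rfl fun m _ => ?_
        rw [← Finset.sum_smul, hpd m]
    rw [h1]
    calc ‖∑ n, ∑ m, p n m • (u n - v m)‖
        ≤ ∑ n, ‖∑ m, p n m • (u n - v m)‖ := norm_sum_le _ _
      _ ≤ ∑ n, ∑ m, ‖p n m • (u n - v m)‖ :=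
          Finset.sum_le_sum fun n _ => norm_sum_le _ _
      _ = ∑ n, ∑ m, ‖u n - v m‖ * p n m := by
          refine Finset.sum_congr rfl fun n _ => Finset.sum_congr rfl fun m _ => ?_
          rw [norm_smul, Real.norm_eq_abs, abs_of_nonneg (hp0 n m), mul_comm]
  have : ‖(∑ n, S n • u n) - dot‖ ≤ 0 := by
    rw [← hE]
    exact le_csInf hne hlb
  have := norm_le_zero_iff.mp this
  exact sub_eq_zero.mp this
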